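/- Let e₁ and e₂ be real numbers with 0 < e₂ < e₁ < 1. Then ∫_{e₂}^{e₁} ln((1 + q)/(1 − q)) / √((e₁² − q²)(q² − e₂²)) dq = (π/e₁) · F(arcsin e₁, e₂/e₁). -/

import Mathlib

open Real intervalIntegral

/-- Incomplete elliptic integral of the first kind `F(φ, k)`. -/
noncomputable def ellipticF (φ k : ℝ) : ℝ :=
  ∫ θ in (0:ℝ)..φ, (1 - k ^ 2 * Real.sin θ ^ 2) ^ (-(1:ℝ)/2)

/-- Incomplete elliptic integral of the second kind `E(φ, k)`. -/
noncomputable def ellipticE (φ k : ℝ) : ℝ :=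
  ∫ θ in (0:ℝ)..φ, (1 - k ^ 2 * Real.sin θ ^ 2) ^ ((1:ℝ)/2)

/-- Complete elliptic integral of the first kind `K(k)`. -/
noncomputable def completeK (k : ℝ) : ℝ := ellipticF (Real.pi / 2) k

/-- Complete elliptic integral of the second kind `E(k)`. -/
noncomputable def completeE (k : ℝ) : ℝ := ellipticE (Real.pi / 2) k

/-- Inverse hyperbolic tangent. -/
noncomputable def arctanh (x : ℝ) : ℝ := Real.log ((1 + x) / (1 - x)) / 2

open Set MeasureTheory

lemma denom_pos {A B : ℝ} (hA : 0 < A) (hB : 0 < B) (x : ℝ) :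
    0 < A * Real.cos x ^ 2 + B * Real.sin x ^ 2 := by
  have h1 := Real.sin_sq_add_cos_sq x
  rcases le_or_gt (Real.sin x ^ 2) (Real.cos x ^ 2) with h | h
  · have : (1:ℝ)/2 ≤ Real.cos x ^ 2 := by linarith
    nlinarith [mul_nonneg hB.le (sq_nonneg (Real.sin x))]
  · have : (1:ℝ)/2 ≤ Real.sin x ^ 2 := by linarith
    nlinarith [mul_nonneg hA.le (sq_nonneg (Real.cos x))]

lemma int_quarter {A B : ℝ} (hA : 0 < A) (hB : 0 < B) :
    ∫ ψ in (0:ℝ)..(π/4), 1 / (A * Real.cos ψ ^ 2 + B * Real.sin ψ ^ 2)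
      = (Real.sqrt (A*B))⁻¹ * Real.arctan (Real.sqrt (B/A)) := by
  have h := intervalIntegral.integral_eq_sub_of_hasDerivAt
    (f := fun ψ => (Real.sqrt (A*B))⁻¹ * Real.arctan (Real.sqrt (B/A) * Real.tan ψ))
    (f' := fun ψ => 1 / (A * Real.cos ψ ^ 2 + B * Real.sin ψ ^ 2))
    (a := 0) (b := π/4) ?_ ?_
  · rw [h]; simp [Real.tan_pi_div_four, Real.tan_zero]
  · intro x hx
    rw [Set.uIcc_of_le (by positivity)] at hx
    have hx1 : 0 ≤ x := hx.1
    have hx2 : x ≤ π/4 := hx.2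
    have hcos : 0 < Real.cos x := by
      apply Real.cos_pos_of_mem_Ioo
      constructor
      · linarith [Real.pi_pos]
      · linarith [Real.pi_pos]
    have hcosne : Real.cos x ≠ 0 := ne_of_gt hcos
    have hd1 : HasDerivAt Real.tan (1 / Real.cos x ^ 2) x := Real.hasDerivAt_tan hcosne
    have hd2 : HasDerivAt (fun ψ => Real.sqrt (B/A) * Real.tan ψ)
        (Real.sqrt (B/A) * (1 / Real.cos x ^ 2)) x := hd1.const_mul _
    have hd3 : HasDerivAt (fun ψ => Real.arctan (Real.sqrt (B/A) * Real.tan ψ))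
        ((1 + (Real.sqrt (B/A) * Real.tan x) ^ 2)⁻¹ * (Real.sqrt (B/A) * (1 / Real.cos x ^ 2))) x :=
      (Real.hasDerivAt_arctan' _).comp x hd2
    have hd4 := hd3.const_mul (Real.sqrt (A*B))⁻¹
    refine hd4.congr_deriv ?_; symm
    have hsa : Real.sqrt A ^ 2 = A := Real.sq_sqrt hA.le
    have hsb : Real.sqrt B ^ 2 = B := Real.sq_sqrt hB.le
    have hsa0 : (0:ℝ) < Real.sqrt A := Real.sqrt_pos.mpr hA
    have hsb0 : (0:ℝ) < Real.sqrt B := Real.sqrt_pos.mpr hB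
    have hdenom : A * Real.cos x ^ 2 + B * Real.sin x ^ 2 ≠ 0 := ne_of_gt (denom_pos hA hB x)
    rw [Real.sqrt_mul hA.le, Real.sqrt_div hB.le, Real.tan_eq_sin_div_cos]
    rw [← hsa, ← hsb] at hdenom ⊢
    field_simp
    rw [Real.sqrt_sq hsa0.le, Real.sqrt_sq hsb0.le]
    ring
  · apply ContinuousOn.intervalIntegrable
    apply ContinuousOn.div continuousOn_const
    · fun_prop
    · intro x _; exact ne_of_gt (denom_pos hA hB x)

lemma int_half {A B : ℝ} (hA : 0 < A) (hB : 0 < B) :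
    ∫ ψ in (0:ℝ)..(π/2), 1 / (A * Real.cos ψ ^ 2 + B * Real.sin ψ ^ 2)
      = π / (2 * Real.sqrt (A*B)) := by
  have hpi : (0:ℝ) < π := Real.pi_pos
  have hcont : ∀ (C D : ℝ), 0 < C → 0 < D → ∀ (a b : ℝ), IntervalIntegrable
      (fun ψ => 1 / (C * Real.cos ψ ^ 2 + D * Real.sin ψ ^ 2)) volume a b := by
    intro C D hC hD a b
    apply ContinuousOn.intervalIntegrable
    apply ContinuousOn.div continuousOn_const
    · fun_prop
    · intro x _; exact ne_of_gt (denom_pos hC hD x)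
  rw [← intervalIntegral.integral_add_adjacent_intervals
    (a := (0:ℝ)) (b := π/4) (c := π/2) (hcont A B hA hB 0 (π/4)) (hcont A B hA hB (π/4) (π/2))]
  have hsub : ∫ ψ in (π/4)..(π/2), 1 / (A * Real.cos ψ ^ 2 + B * Real.sin ψ ^ 2)
      = ∫ ψ in (0:ℝ)..(π/4), 1 / (B * Real.cos ψ ^ 2 + A * Real.sin ψ ^ 2) := by
    have := intervalIntegral.integral_comp_sub_left
      (a := (0:ℝ)) (b := π/4)
      (fun ψ => 1 / (A * Real.cos ψ ^ 2 + B * Real.sin ψ ^ 2)) (π/2)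
    rw [show π/2 - π/4 = π/4 by ring, sub_zero] at this
    rw [← this]
    apply intervalIntegral.integral_congr
    intro x _
    simp [Real.cos_pi_div_two_sub, Real.sin_pi_div_two_sub]
    ring_nf
  rw [hsub, int_quarter hA hB, int_quarter hB hA]
  have hu : 0 < Real.sqrt (B/A) := Real.sqrt_pos.mpr (by positivity)
  have hinv : Real.sqrt (A/B) = (Real.sqrt (B/A))⁻¹ := by
    rw [← Real.sqrt_inv]; congr 1; field_simp
  rw [hinv, Real.arctan_inv_of_pos hu, show B*A = A*B by ring]
  have : Real.sqrt (A*B) ≠ 0 := ne_of_gt (Real.sqrt_pos.mpr (by positivity))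
  field_simp
  ring

lemma int_log {q : ℝ} (h0 : 0 < q) (h1 : q < 1) :
    ∫ t in (0:ℝ)..1, 2*q / (1 - q^2 * t^2) = Real.log ((1+q)/(1-q)) := by
  have key : ∀ t ∈ Set.uIcc (0:ℝ) 1, 0 < 1 - q^2 * t^2 := by
    intro t ht
    rw [Set.uIcc_of_le (by norm_num)] at ht
    have h3 : 0 ≤ q*t := mul_nonneg h0.le ht.1
    have h4 : q*t < 1 := by nlinarith [ht.1, ht.2]
    nlinarith [mul_pos (by linarith : (0:ℝ) < 1 - q*t) (by linarith : (0:ℝ) < 1 + q*t)]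
  have h := intervalIntegral.integral_eq_sub_of_hasDerivAt
    (f := fun t => Real.log (1 + q*t) - Real.log (1 - q*t))
    (f' := fun t => 2*q / (1 - q^2 * t^2)) (a := 0) (b := 1) ?_ ?_
  · rw [h]
    simp only [mul_one, mul_zero, add_zero, sub_zero, Real.log_one]
    rw [Real.log_div (by linarith) (by linarith)]
  · intro x hx
    rw [Set.uIcc_of_le (by norm_num)] at hx
    have hx1 : 0 ≤ x := hx.1
    have hx2 : x ≤ 1 := hx.2
    have hp : 0 < 1 + q*x := by nlinarith
    have hm : 0 < 1 - q*x := by nlinarith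
    have hd1 : HasDerivAt (fun t : ℝ => 1 + q*t) q x := by
      simpa using ((hasDerivAt_id' x).const_mul q).const_add (1:ℝ)
    have hd2 : HasDerivAt (fun t : ℝ => 1 - q*t) (-q) x := by
      simpa using ((hasDerivAt_id' x).const_mul q).const_sub (1:ℝ)
    have hl1 : HasDerivAt (fun t : ℝ => Real.log (1 + q*t)) (q / (1 + q*x)) x :=
      hd1.log (ne_of_gt hp)
    have hl2 : HasDerivAt (fun t : ℝ => Real.log (1 - q*t)) (-q / (1 - q*x)) x :=
      hd2.log (ne_of_gt hm)
    refine (hl1.sub hl2).congr_deriv ?_; symm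
    have hne : (1:ℝ) - q^2*x^2 ≠ 0 := by nlinarith [mul_pos hp hm]
    field_simp
    ring
  · apply ContinuousOn.intervalIntegrable
    apply ContinuousOn.div continuousOn_const
    · fun_prop
    · intro x hx; exact ne_of_gt (key x hx)

lemma int_outer {e₁ e₂ : ℝ} (h0 : 0 < e₂) (h21 : e₂ < e₁) (h11 : e₁ < 1) :
    ∫ t in (0:ℝ)..1, π / Real.sqrt ((1 - e₂^2*t^2) * (1 - e₁^2*t^2))
      = π / e₁ * ellipticF (Real.arcsin e₁) (e₂ / e₁) := by
  have he₁ : 0 < e₁ := h0.trans h21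
  have hk : e₂ / e₁ < 1 := (div_lt_one he₁).mpr h21
  have hk0 : 0 < e₂ / e₁ := by positivity
  set g : ℝ → ℝ := fun θ => (1 - (e₂/e₁)^2 * Real.sin θ^2) ^ (-(1:ℝ)/2) with hg
  have hgpos : ∀ θ, 0 < 1 - (e₂/e₁)^2 * Real.sin θ^2 := by
    intro θ
    have hs : Real.sin θ^2 ≤ 1 := Real.sin_sq_le_one θ
    nlinarith [sq_nonneg (e₂/e₁), hk0, hk, hs, sq_nonneg (Real.sin θ)]
  have hgcont : Continuous g := by
    apply Continuous.rpow_const (by fun_prop)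
    intro x; exact Or.inl (ne_of_gt (hgpos x))
  set f : ℝ → ℝ := fun t => Real.arcsin (e₁ * t) with hf
  set f' : ℝ → ℝ := fun t => (1 / Real.sqrt (1 - (e₁*t)^2)) * e₁ with hf'
  have hbd : ∀ x ∈ Set.uIcc (0:ℝ) 1, 0 < 1 - (e₁*x)^2 := by
    intro x hx
    rw [Set.uIcc_of_le (by norm_num)] at hx
    have h3 : 0 ≤ e₁*x := mul_nonneg he₁.le hx.1
    have h4 : e₁*x < 1 := by nlinarith [hx.1, hx.2]
    nlinarith
  have hderiv : ∀ x ∈ Set.uIcc (0:ℝ) 1, HasDerivAt f (f' x) x := by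
    intro x hx
    have hb := hbd x hx
    rw [Set.uIcc_of_le (by norm_num)] at hx
    have h1 : e₁ * x ≠ -1 := by nlinarith [hx.1]
    have h2 : e₁ * x ≠ 1 := by nlinarith [hx.1, hx.2]
    have := (Real.hasDerivAt_arcsin h1 h2).comp x ((hasDerivAt_id x).const_mul e₁)
    exact this.congr_deriv (by simp [hf'])
  have hcont' : ContinuousOn f' (Set.uIcc 0 1) := by
    apply ContinuousOn.mul _ continuousOn_const
    apply ContinuousOn.div continuousOn_const
    · fun_prop
    · intro x hx
      exact ne_of_gt (Real.sqrt_pos.mpr (hbd x hx))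
  have hcv := intervalIntegral.integral_comp_smul_deriv hderiv hcont' hgcont
  have hf0 : f 0 = 0 := by simp [hf]
  have hf1 : f 1 = Real.arcsin e₁ := by simp [hf]
  rw [hf0, hf1] at hcv
  rw [ellipticF, ← hcv]
  rw [show Real.pi / e₁ * (∫ x in (0:ℝ)..1, f' x • (g ∘ f) x)
      = ∫ x in (0:ℝ)..1, Real.pi / e₁ * (f' x • (g ∘ f) x) from
    (intervalIntegral.integral_const_mul _ _).symm]
  apply intervalIntegral.integral_congr
  intro x hx
  have hb := hbd x hx
  have hA : 0 < 1 - e₂^2 * x^2 := by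
    have : e₂^2 * x^2 ≤ e₁^2 * x^2 := by
      nlinarith [mul_nonneg (by nlinarith : (0:ℝ) ≤ e₁^2 - e₂^2) (sq_nonneg x)]
    nlinarith [hb]
  have hsin : Real.sin (f x) = e₁ * x := by
    apply Real.sin_arcsin
    · nlinarith [hb]
    · nlinarith [hb]
  have harg : 1 - (e₂/e₁)^2 * Real.sin (f x)^2 = 1 - e₂^2 * x^2 := by
    rw [hsin]
    field_simp
  have hrp : g (f x) = (Real.sqrt (1 - e₂^2 * x^2))⁻¹ := by
    rw [hg]
    simp only
    rw [harg, show (-(1:ℝ)/2) = -(1/2) by ring, Real.rpow_neg hA.le, ← Real.sqrt_eq_rpow]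
  simp only [Function.comp, smul_eq_mul]
  rw [hrp, hf']
  simp only
  rw [Real.sqrt_mul hA.le]
  have h1 : 0 < Real.sqrt (1 - e₂^2*x^2) := Real.sqrt_pos.mpr hA
  have h2 : 0 < Real.sqrt (1 - (e₁*x)^2) := Real.sqrt_pos.mpr hb
  rw [show 1 - e₁^2*x^2 = 1 - (e₁*x)^2 by ring]
  rw [div_mul_eq_mul_div, mul_comm (Real.sqrt _) (Real.sqrt _)]
  field_simp

lemma swap_int {P : ℝ → ℝ} (hP : Continuous P) (hge : ∀ ψ, 0 ≤ P ψ) {c : ℝ}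
    (hc : c < 1) (hle : ∀ ψ, P ψ ≤ c) :
    ∫ ψ in (0:ℝ)..(π/2), ∫ t in (0:ℝ)..1, 2 / (1 - P ψ * t^2)
      = ∫ t in (0:ℝ)..1, ∫ ψ in (0:ℝ)..(π/2), 2 / (1 - P ψ * t^2) := by
  have hpi : (0:ℝ) ≤ π/2 := by positivity
  have hsub : (Set.Ioc (0:ℝ) (π/2)) ×ˢ (Set.Ioc (0:ℝ) 1)
      ⊆ (Set.Icc (0:ℝ) (π/2)) ×ˢ (Set.Icc (0:ℝ) 1) :=
    Set.prod_mono Set.Ioc_subset_Icc_self Set.Ioc_subset_Icc_self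
  have hco : ContinuousOn (fun p : ℝ × ℝ => 2 / (1 - P p.1 * p.2^2))
      ((Set.Icc (0:ℝ) (π/2)) ×ˢ (Set.Icc (0:ℝ) 1)) := by
    apply ContinuousOn.div continuousOn_const
    · fun_prop
    · rintro ⟨x, y⟩ hp
      rw [Set.mem_prod] at hp
      have h1 : P x ≤ c := hle x
      have h2 : 0 ≤ P x := hge x
      have h3 : y^2 ≤ 1 := by nlinarith [hp.2.1, hp.2.2]
      have : P x * y^2 ≤ c := by nlinarith [sq_nonneg y]
      simp only
      intro hcon
      nlinarith
  have hint : IntegrableOn (fun p : ℝ × ℝ => 2 / (1 - P p.1 * p.2^2))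
      ((Set.Ioc (0:ℝ) (π/2)) ×ˢ (Set.Ioc (0:ℝ) 1)) volume :=
    (hco.integrableOn_compact (isCompact_Icc.prod isCompact_Icc)).mono_set hsub
  have hint2 : Integrable (Function.uncurry (fun ψ t => 2 / (1 - P ψ * t^2)))
      ((volume.restrict (Set.Ioc (0:ℝ) (π/2))).prod (volume.restrict (Set.Ioc (0:ℝ) 1))) := by
    rw [Measure.prod_restrict, ← Measure.volume_eq_prod]
    exact hint
  have h := MeasureTheory.integral_integral_swap hint2
  rw [intervalIntegral.integral_of_le hpi, intervalIntegral.integral_of_le (by norm_num : (0:ℝ) ≤ 1)]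
  simp only [intervalIntegral.integral_of_le hpi,
    intervalIntegral.integral_of_le (by norm_num : (0:ℝ) ≤ 1)]
  exact h

theorem stmt_1 (e₁ e₂ : ℝ) (h0 : 0 < e₂) (h21 : e₂ < e₁) (h11 : e₁ < 1) :
    (∫ q in e₂..e₁,
        Real.log ((1 + q) / (1 - q)) / Real.sqrt ((e₁ ^ 2 - q ^ 2) * (q ^ 2 - e₂ ^ 2)))
      = Real.pi / e₁ * ellipticF (Real.arcsin e₁) (e₂ / e₁) := by
  have he₁ : 0 < e₁ := h0.trans h21
  have hd : 0 < e₁^2 - e₂^2 := by nlinarith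
  set g : ℝ → ℝ := fun q => Real.log ((1 + q) / (1 - q)) / Real.sqrt ((e₁^2 - q^2) * (q^2 - e₂^2))
    with hgdef
  set P : ℝ → ℝ := fun ψ => e₂^2 + (e₁^2 - e₂^2) * Real.sin ψ^2 with hPdef
  set Q : ℝ → ℝ := fun ψ => Real.sqrt (P ψ) with hQdef
  set qd : ℝ → ℝ := fun ψ => (e₁^2 - e₂^2) * (2 * Real.sin ψ * Real.cos ψ) / (2 * Real.sqrt (P ψ))
    with hqddef
  have hPlow : ∀ ψ, e₂^2 ≤ P ψ := fun ψ => by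
    simp only [hPdef]; nlinarith [sq_nonneg (Real.sin ψ)]
  have hPhigh : ∀ ψ, P ψ ≤ e₁^2 := fun ψ => by
    simp only [hPdef]; nlinarith [Real.sin_sq_le_one ψ]
  have hPpos : ∀ ψ, 0 < P ψ := fun ψ => lt_of_lt_of_le (by positivity) (hPlow ψ)
  have hQlow : ∀ ψ, e₂ ≤ Q ψ := fun ψ =>
    calc e₂ = Real.sqrt (e₂^2) := (Real.sqrt_sq h0.le).symm
    _ ≤ Real.sqrt (P ψ) := Real.sqrt_le_sqrt (hPlow ψ)
  have hQhigh : ∀ ψ, Q ψ ≤ e₁ :=  fun ψ =>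
    calc Q ψ ≤ Real.sqrt (e₁^2) := Real.sqrt_le_sqrt (hPhigh ψ)
    _ = e₁ := Real.sqrt_sq he₁.le
  have hQ0 : ∀ ψ, 0 < Q ψ := fun ψ => lt_of_lt_of_le h0 (hQlow ψ)
  have hQ1 : ∀ ψ, Q ψ < 1 := fun ψ => lt_of_le_of_lt (hQhigh ψ) h11
  -- derivative of Q
  have hQderiv : ∀ ψ, HasDerivAt Q (qd ψ) ψ := by
    intro ψ
    have hsin : HasDerivAt (fun x : ℝ => Real.sin x ^ 2)
        (2 * Real.sin ψ ^ (2-1) * Real.cos ψ) ψ := (Real.hasDerivAt_sin ψ).pow 2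
    have hP : HasDerivAt P ((e₁^2 - e₂^2) * (2 * Real.sin ψ * Real.cos ψ)) ψ := by
      have := (hsin.const_mul (e₁^2 - e₂^2)).const_add (e₂^2)
      simpa [hPdef, mul_assoc, pow_one] using this
    have := hP.sqrt (ne_of_gt (hPpos ψ))
    simpa [hQdef, hqddef] using this
  -- strict monotonicity on [0, π/2]
  have hmono : StrictMonoOn Q (Set.Icc 0 (π/2)) := by
    intro x hx y hy hxy
    have hsx : Real.sin x < Real.sin y := by
      apply Real.strictMonoOn_sin _ _ hxy
      · exact ⟨by linarith [hx.1, Real.pi_pos], hx.2⟩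
      · exact ⟨by linarith [hy.1, Real.pi_pos], hy.2⟩
    have hsx0 : 0 ≤ Real.sin x := Real.sin_nonneg_of_nonneg_of_le_pi hx.1
      (by linarith [hx.2, Real.pi_pos])
    have hsq : Real.sin x ^ 2 < Real.sin y ^ 2 := by nlinarith
    have hPlt : P x < P y := by simp only [hPdef]; nlinarith
    rw [hQdef]
    exact Real.sqrt_lt_sqrt (hPpos x).le hPlt
  have hmono' : StrictMonoOn Q (Set.Ioo 0 (π/2)) :=
    hmono.mono Set.Ioo_subset_Icc_self
  -- image
  have hQ00 : Q 0 = e₂ := by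
    simp only [hQdef, hPdef, Real.sin_zero]
    norm_num
    exact Real.sqrt_sq h0.le
  have hQpi : Q (π/2) = e₁ := by
    simp only [hQdef, hPdef, Real.sin_pi_div_two]
    rw [show e₂^2 + (e₁^2 - e₂^2) * 1^2 = e₁^2 by ring]
    exact Real.sqrt_sq he₁.le
  have himage : Q '' (Set.Ioo 0 (π/2)) = Set.Ioo e₂ e₁ := by
    apply Set.Subset.antisymm
    · rintro _ ⟨ψ, hψ, rfl⟩
      have hs0 : 0 < Real.sin ψ := Real.sin_pos_of_pos_of_lt_pi hψ.1
        (by linarith [hψ.2, Real.pi_pos])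
      have hs1 : Real.sin ψ < 1 := by
        have := Real.strictMonoOn_sin
          (Set.mem_Icc.mpr ⟨by linarith [hψ.1, Real.pi_pos], hψ.2.le⟩)
          (Set.mem_Icc.mpr ⟨by linarith [Real.pi_pos], le_refl _⟩) hψ.2
        rwa [Real.sin_pi_div_two] at this
      have h1 : e₂^2 < P ψ := by
        simp only [hPdef]; nlinarith [mul_pos hd (pow_pos hs0 2)]
      have h2 : P ψ < e₁^2 := by
        have hs2 : Real.sin ψ^2 < 1 := by nlinarith
        simp only [hPdef]; nlinarith [mul_lt_mul_of_pos_left hs2 hd]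
      constructor
      · rw [hQdef]; exact (Real.lt_sqrt h0.le).mpr h1
      · rw [hQdef]; exact (Real.sqrt_lt' he₁).mpr h2
    · have hcont : ContinuousOn Q (Set.Icc 0 (π/2)) := by
        apply Continuous.continuousOn
        rw [hQdef]
        fun_prop
      have := intermediate_value_Ioo (by positivity : (0:ℝ) ≤ π/2) hcont
      rwa [hQ00, hQpi] at this
  have hmeas : MeasurableSet (Set.Ioo (0:ℝ) (π/2)) := measurableSet_Ioo
  have hderivW : ∀ ψ ∈ Set.Ioo (0:ℝ) (π/2), HasDerivWithinAt Q (qd ψ) (Set.Ioo 0 (π/2)) ψ :=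
    fun ψ _ => (hQderiv ψ).hasDerivWithinAt
  have hinj : Set.InjOn Q (Set.Ioo 0 (π/2)) := hmono'.injOn
  have hchg := MeasureTheory.integral_image_eq_integral_abs_deriv_smul hmeas hderivW hinj g
  rw [himage] at hchg
  set H : ℝ → ℝ := fun ψ => Real.log ((1 + Q ψ)/(1 - Q ψ)) / Q ψ with hHdef
  have hQsq : ∀ ψ, Q ψ^2 = P ψ := fun ψ => Real.sq_sqrt (hPpos ψ).le
  have hH : ∀ ψ ∈ Set.Ioo (0:ℝ) (π/2), |qd ψ| • g (Q ψ) = H ψ := by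
    intro ψ hψ
    have hs0 : 0 < Real.sin ψ := Real.sin_pos_of_pos_of_lt_pi hψ.1
      (by linarith [hψ.2, Real.pi_pos])
    have hc0 : 0 < Real.cos ψ := Real.cos_pos_of_mem_Ioo
      ⟨by linarith [hψ.1, Real.pi_pos], hψ.2⟩
    have harg : (e₁^2 - Q ψ^2) * (Q ψ^2 - e₂^2)
        = ((e₁^2 - e₂^2) * Real.sin ψ * Real.cos ψ)^2 := by
      rw [hQsq]
      simp only [hPdef]
      linear_combination (-((e₁^2-e₂^2)^2 * Real.sin ψ^2)) * (Real.sin_sq_add_cos_sq ψ)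
    have hsqrt : Real.sqrt ((e₁^2 - Q ψ^2) * (Q ψ^2 - e₂^2))
        = (e₁^2 - e₂^2) * Real.sin ψ * Real.cos ψ := by
      rw [harg]
      exact Real.sqrt_sq (by positivity)
    have hqd0 : 0 ≤ qd ψ := by
      rw [hqddef]
      apply div_nonneg
      · apply mul_nonneg hd.le
        positivity
      · positivity
    have hQne : Real.sqrt (P ψ) ≠ 0 := ne_of_gt (Real.sqrt_pos.mpr (hPpos ψ))
    rw [abs_of_nonneg hqd0, smul_eq_mul, hgdef, hHdef]
    simp only [hqddef, hQdef]
    rw [show Real.sqrt ((e₁ ^ 2 - Real.sqrt (P ψ) ^ 2) * (Real.sqrt (P ψ) ^ 2 - e₂ ^ 2))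
        = (e₁^2 - e₂^2) * Real.sin ψ * Real.cos ψ from hsqrt]
    rw [div_mul_div_comm]
    rw [show (e₁ ^ 2 - e₂ ^ 2) * (2 * Real.sin ψ * Real.cos ψ) *
        Real.log ((1 + Real.sqrt (P ψ)) / (1 - Real.sqrt (P ψ)))
        = Real.log ((1 + Real.sqrt (P ψ)) / (1 - Real.sqrt (P ψ))) *
          (2 * ((e₁ ^ 2 - e₂ ^ 2) * Real.sin ψ * Real.cos ψ)) by ring]
    rw [show 2 * Real.sqrt (P ψ) * ((e₁ ^ 2 - e₂ ^ 2) * Real.sin ψ * Real.cos ψ)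
        = Real.sqrt (P ψ) * (2 * ((e₁ ^ 2 - e₂ ^ 2) * Real.sin ψ * Real.cos ψ)) by ring]
    apply mul_div_mul_right
    positivity
  have hpi2 : (0:ℝ) ≤ π/2 := by positivity
  have key1 : (∫ q in e₂..e₁, g q) = ∫ ψ in (0:ℝ)..(π/2), H ψ := by
    rw [intervalIntegral.integral_of_le h21.le, MeasureTheory.integral_Ioc_eq_integral_Ioo,
      hchg, intervalIntegral.integral_of_le hpi2, MeasureTheory.integral_Ioc_eq_integral_Ioo]
    exact MeasureTheory.setIntegral_congr_fun hmeas hH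
  have hHrep : ∀ ψ, H ψ = ∫ t in (0:ℝ)..1, 2 / (1 - P ψ * t^2) := by
    intro ψ
    have hq0 := hQ0 ψ
    have hq1 := hQ1 ψ
    have hlog := int_log hq0 hq1
    rw [hHdef]
    simp only
    rw [← hlog]
    rw [div_eq_inv_mul, ← intervalIntegral.integral_const_mul]
    apply intervalIntegral.integral_congr
    intro t _
    simp only
    rw [hQsq ψ]
    rw [show (Q ψ)⁻¹ * (2 * Q ψ / (1 - P ψ * t ^ 2))
        = ((Q ψ)⁻¹ * Q ψ) * (2 / (1 - P ψ * t ^ 2)) by ring]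
    rw [inv_mul_cancel₀ (ne_of_gt hq0), one_mul]
  have key2 : (∫ ψ in (0:ℝ)..(π/2), H ψ)
      = ∫ t in (0:ℝ)..1, ∫ ψ in (0:ℝ)..(π/2), 2 / (1 - P ψ * t^2) := by
    rw [show (∫ ψ in (0:ℝ)..(π/2), H ψ)
        = ∫ ψ in (0:ℝ)..(π/2), ∫ t in (0:ℝ)..1, 2 / (1 - P ψ * t^2) from
      intervalIntegral.integral_congr (fun ψ _ => hHrep ψ)]
    apply swap_int
    · rw [hPdef]; fun_prop
    · exact fun ψ => (hPpos ψ).le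
    · exact (by nlinarith : e₁^2 < 1)
    · exact hPhigh
  have key3 : (∫ t in (0:ℝ)..1, ∫ ψ in (0:ℝ)..(π/2), 2 / (1 - P ψ * t^2))
      = ∫ t in (0:ℝ)..1, π / Real.sqrt ((1 - e₂^2*t^2) * (1 - e₁^2*t^2)) := by
    apply intervalIntegral.integral_congr
    intro t ht
    rw [Set.uIcc_of_le (by norm_num : (0:ℝ) ≤ 1)] at ht
    have ht2 : t^2 ≤ 1 := by nlinarith [ht.1, ht.2]
    have hA : 0 < 1 - e₂^2*t^2 := by nlinarith [sq_nonneg e₂, sq_nonneg t]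
    have hB : 0 < 1 - e₁^2*t^2 := by nlinarith [sq_nonneg e₁, sq_nonneg t]
    simp only
    have hpt : ∀ ψ, 2 / (1 - P ψ * t^2)
        = 2 * (1 / ((1 - e₂^2*t^2) * Real.cos ψ^2 + (1 - e₁^2*t^2) * Real.sin ψ^2)) := by
      intro ψ
      rw [mul_one_div]
      congr 1
      rw [Real.cos_sq']
      simp only [hPdef]
      ring
    rw [intervalIntegral.integral_congr (fun ψ _ => hpt ψ),
      intervalIntegral.integral_const_mul, int_half hA hB]
    have hs : Real.sqrt ((1 - e₂^2*t^2) * (1 - e₁^2*t^2)) ≠ 0 :=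
      ne_of_gt (Real.sqrt_pos.mpr (by positivity))
    field_simp
  rw [key1, key2, key3]
  exact int_outer h0 h21 h11
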